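/- Let R ⊆ S_n be a top-k partial ranking with n − k ≥ 2, let σ be uniformly distributed on R, and let σ_0 ∈ R be fixed. Set X = d(σ, σ_0) and Y = d(A_R(σ), σ_0). Then Cov(X, Y) = −Var(X) < 0; in particular X and Y have strictly negative covariance. -/

import Mathlib

/-- The Kendall (tau) distance between two permutations of `Fin n`:
the number of pairs `(x, y)` with `x < y` on which `σ⁻¹` and `τ⁻¹`
disagree in relative order. -/
def kendallDist {n : ℕ} (σ τ : Equiv.Perm (Fin n)) : ℕ :=
  (Finset.univ.filter (fun p : Fin n × Fin n =>
    p.1 < p.2 ∧ ¬((σ⁻¹ p.1 < σ⁻¹ p.2) ↔ (τ⁻¹ p.1 < τ⁻¹ p.2)))).card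

/-- The top-`k` partial ranking determined by the items `a 0, …, a (k-1)`:
the set of full rankings (permutations) `σ` with `σ i = a i` for the first
`k` positions. -/
def topkFinset {n k : ℕ} (hk : k ≤ n) (a : Fin k → Fin n) :
    Finset (Equiv.Perm (Fin n)) :=
  Finset.univ.filter fun σ => ∀ i : Fin k, σ (Fin.castLE hk i) = a i

/-- The permutation of `Fin n` fixing the first `k` positions and reversing
the order of the remaining `n - k` positions. -/
def revAfter (n k : ℕ) : Equiv.Perm (Fin n) :=
  Function.Involutive.toPerm
    (fun p => if _h : (p : ℕ) < k then p
      else ⟨n + k - 1 - (p : ℕ), by have := p.isLt; omega⟩)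
    (by
      intro p
      have hp := p.isLt
      by_cases h : (p : ℕ) < k
      · simp [h]
      · have h2 : ¬ (n + k - 1 - (p : ℕ) < k) := by omega
        simp only [dif_neg h, dif_neg h2]
        ext
        simp
        omega)

/-- The antithetic permutation of `σ` relative to a top-`k` partial ranking:
the first `k` positions are unchanged and the remaining positions are
reversed, i.e. `A σ (k+j) = σ (n+1-j)` (in 1-indexed notation). -/
def antithetic (n k : ℕ) (σ : Equiv.Perm (Fin n)) : Equiv.Perm (Fin n) :=
  σ * revAfter n k

/-! Every `σ` in a top-`k` ranking agrees with `σ₀` on the first `k` positions, so a pair of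
items can be discordant (for `σ` or for its antithetic partner, measured against `σ₀`) only when
both items sit in the tail. Reversing the tail flips the relative order of every such pair, so
each tail pair is discordant for exactly one of `σ` and `A_R(σ)`. Hence `X + Y` is constant on
`R`, and `Cov(X, c - X) = -Var(X)`. The variance is positive since `X` vanishes at `σ₀` but not
at `σ₀` composed with the transposition of the first two tail positions, which needs
`n - k ≥ 2`. -/

open Finset
open scoped BigOperators

section

variable {ι K : Type*} [Field K] [CharZero K] {s : Finset ι}

theorem expect_mul_self_sub_expect_mul_expect (hs : s.Nonempty) (X : ι → K) :
    𝔼 i ∈ s, X i * X i - (𝔼 i ∈ s, X i) * 𝔼 i ∈ s, X i =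
      𝔼 i ∈ s, (X i - 𝔼 j ∈ s, X j) ^ 2 := by
  set μ := 𝔼 j ∈ s, X j
  simp_rw [show ∀ x, (x - μ) ^ 2 = x * x - 2 * μ * x + μ ^ 2 by intro; ring,
    expect_add_distrib, expect_sub_distrib, ← mul_expect, expect_const hs]
  ring

theorem cov_eq_neg_var_of_add_eq_const (hs : s.Nonempty) {X Y : ι → K} {c : K}
    (h : ∀ i ∈ s, X i + Y i = c) :
    𝔼 i ∈ s, X i * Y i - (𝔼 i ∈ s, X i) * 𝔼 i ∈ s, Y i =
      -(𝔼 i ∈ s, X i * X i - (𝔼 i ∈ s, X i) * 𝔼 i ∈ s, X i) := by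
  have hY : ∀ i ∈ s, Y i = c - X i := fun i hi => eq_sub_of_add_eq' (h i hi)
  rw [expect_congr rfl fun i hi => congrArg (X i * ·) (hY i hi), expect_congr rfl hY]
  simp_rw [mul_sub, expect_sub_distrib, expect_const hs, ← expect_mul]
  ring
end

section

variable {ι K : Type*} [Field K] [LinearOrder K] [IsStrictOrderedRing K] {s : Finset ι}

theorem expect_mul_self_sub_expect_mul_expect_pos {X : ι → K} {i j : ι} (hi : i ∈ s)
    (hj : j ∈ s) (hX : X i ≠ X j) :
    0 < 𝔼 l ∈ s, X l * X l - (𝔼 l ∈ s, X l) * 𝔼 l ∈ s, X l := by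
  rw [expect_mul_self_sub_expect_mul_expect ⟨i, hi⟩]
  obtain ⟨l, hl, hne⟩ : ∃ l ∈ s, X l ≠ 𝔼 l ∈ s, X l := by
    by_cases hμ : X i = 𝔼 l ∈ s, X l
    · exact ⟨j, hj, fun h => hX (hμ.trans h.symm)⟩
    · exact ⟨i, hi, hμ⟩
  exact expect_pos' (fun _ _ => sq_nonneg _) ⟨l, hl, sq_pos_of_ne_zero (sub_ne_zero.2 hne)⟩
end

theorem Finset.card_filter_add_card_filter_of_partition {α : Type*} [DecidableEq α]
    (s : Finset α) {p q r : α → Prop} [DecidablePred p] [DecidablePred q] [DecidablePred r]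
    (h : ∀ x ∈ s, (p x ∨ q x ↔ r x) ∧ ¬(p x ∧ q x)) :
    #(s.filter p) + #(s.filter q) = #(s.filter r) := by
  rw [← card_union_of_disjoint (disjoint_filter.2 fun x hx hp hq => (h x hx).2 ⟨hp, hq⟩),
    ← filter_or, filter_congr fun x hx => (h x hx).1]

theorem revAfter_val (n k : ℕ) (p : Fin n) :
    (revAfter n k p : ℕ) = if (p : ℕ) < k then (p : ℕ) else n + k - 1 - p := by
  simp only [revAfter, Function.Involutive.toPerm, Equiv.coe_fn_mk]
  split_ifs <;> rfl

theorem revAfter_lt_revAfter_iff {n k : ℕ} {u v : Fin n} (huv : u ≠ v) :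
    revAfter n k u < revAfter n k v ↔ (u < v ↔ (u : ℕ) < k ∨ (v : ℕ) < k) := by
  have hu := u.isLt
  have hv := v.isLt
  have huv' : (u : ℕ) ≠ v := Fin.val_ne_of_ne huv
  rw [Fin.lt_def, Fin.lt_def, revAfter_val, revAfter_val]
  split_ifs <;> omega

theorem antithetic_inv_apply (n k : ℕ) (σ : Equiv.Perm (Fin n)) (x : Fin n) :
    (antithetic n k σ)⁻¹ x = revAfter n k (σ⁻¹ x) := by
  have h : (revAfter n k)⁻¹ = revAfter n k := rfl
  simp [antithetic, mul_inv_rev, h]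

section topk

variable {n k : ℕ} {hk : k ≤ n} {a : Fin k → Fin n} {σ τ : Equiv.Perm (Fin n)}

theorem inv_apply_eq_of_mem_topkFinset (hσ : σ ∈ topkFinset hk a) (hτ : τ ∈ topkFinset hk a)
    {x : Fin n} (hx : (σ⁻¹ x : ℕ) < k) : τ⁻¹ x = σ⁻¹ x := by
  simp only [topkFinset, mem_filter, mem_univ, true_and] at hσ hτ
  have hcast : Fin.castLE hk ⟨_, hx⟩ = σ⁻¹ x := rfl
  rw [Equiv.Perm.inv_eq_iff_eq, ← hcast, hτ, ← hσ, hcast]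
  exact (σ.apply_symm_apply x).symm

theorem inv_apply_lt_iff_of_mem_topkFinset (hσ : σ ∈ topkFinset hk a)
    (hτ : τ ∈ topkFinset hk a) (x : Fin n) : (σ⁻¹ x : ℕ) < k ↔ (τ⁻¹ x : ℕ) < k :=
  ⟨fun h => inv_apply_eq_of_mem_topkFinset hσ hτ h ▸ h,
    fun h => inv_apply_eq_of_mem_topkFinset hτ hσ h ▸ h⟩

theorem inv_lt_inv_iff_of_mem_topkFinset (hσ : σ ∈ topkFinset hk a)
    (hτ : τ ∈ topkFinset hk a) {x y : Fin n} (hxy : (σ⁻¹ x : ℕ) < k ∨ (σ⁻¹ y : ℕ) < k) :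
    σ⁻¹ x < σ⁻¹ y ↔ τ⁻¹ x < τ⁻¹ y := by
  have hx : (σ⁻¹ x : ℕ) < k → (τ⁻¹ x : ℕ) = σ⁻¹ x :=
    fun h => congrArg Fin.val (inv_apply_eq_of_mem_topkFinset hσ hτ h)
  have hx' : (τ⁻¹ x : ℕ) < k → (σ⁻¹ x : ℕ) = τ⁻¹ x :=
    fun h => congrArg Fin.val (inv_apply_eq_of_mem_topkFinset hτ hσ h)
  have hy : (σ⁻¹ y : ℕ) < k → (τ⁻¹ y : ℕ) = σ⁻¹ y :=
    fun h => congrArg Fin.val (inv_apply_eq_of_mem_topkFinset hσ hτ h)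
  have hy' : (τ⁻¹ y : ℕ) < k → (σ⁻¹ y : ℕ) = τ⁻¹ y :=
    fun h => congrArg Fin.val (inv_apply_eq_of_mem_topkFinset hτ hσ h)
  rw [Fin.lt_def, Fin.lt_def]
  omega

theorem mul_swap_mem_topkFinset (hσ : σ ∈ topkFinset hk a) {i j : Fin n} (hi : k ≤ (i : ℕ))
    (hj : k ≤ (j : ℕ)) : σ * Equiv.swap i j ∈ topkFinset hk a := by
  simp only [topkFinset, mem_filter, mem_univ, true_and] at hσ ⊢
  intro l
  have hli : Fin.castLE hk l ≠ i := fun h => by have := congrArg Fin.val h; simp at this; omega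
  have hlj : Fin.castLE hk l ≠ j := fun h => by have := congrArg Fin.val h; simp at this; omega
  rw [Equiv.Perm.mul_apply, Equiv.swap_apply_of_ne_of_ne hli hlj, hσ]

end topk

def Discordant {n : ℕ} (σ τ : Equiv.Perm (Fin n)) (x y : Fin n) : Prop :=
  ¬(σ⁻¹ x < σ⁻¹ y ↔ τ⁻¹ x < τ⁻¹ y)

instance {n : ℕ} (σ τ : Equiv.Perm (Fin n)) (x y : Fin n) : Decidable (Discordant σ τ x y) :=
  inferInstanceAs (Decidable ¬(_ ↔ _))

theorem kendallDist_eq_card_discordant {n : ℕ} (σ τ : Equiv.Perm (Fin n)) :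
    kendallDist σ τ = #{p : Fin n × Fin n | p.1 < p.2 ∧ Discordant σ τ p.1 p.2} :=
  rfl

theorem discordant_or_discordant_antithetic_iff_and_not_and {n k : ℕ} {hk : k ≤ n}
    {a : Fin k → Fin n} {σ σ₀ : Equiv.Perm (Fin n)} (hσ : σ ∈ topkFinset hk a)
    (hσ₀ : σ₀ ∈ topkFinset hk a) {x y : Fin n} (hxy : x ≠ y) :
    (Discordant σ σ₀ x y ∨ Discordant (antithetic n k σ) σ₀ x y ↔
        k ≤ (σ₀⁻¹ x : ℕ) ∧ k ≤ (σ₀⁻¹ y : ℕ)) ∧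
      ¬(Discordant σ σ₀ x y ∧ Discordant (antithetic n k σ) σ₀ x y) := by
  have hhead := inv_lt_inv_iff_of_mem_topkFinset hσ hσ₀ (x := x) (y := y)
  rw [inv_apply_lt_iff_of_mem_topkFinset hσ hσ₀ x,
    inv_apply_lt_iff_of_mem_topkFinset hσ hσ₀ y] at hhead
  simp only [Discordant, antithetic_inv_apply, revAfter_lt_revAfter_iff (σ⁻¹.injective.ne hxy),
    inv_apply_lt_iff_of_mem_topkFinset hσ hσ₀ x, inv_apply_lt_iff_of_mem_topkFinset hσ hσ₀ y,
    ← not_lt]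
  tauto

theorem kendallDist_add_kendallDist_antithetic {n k : ℕ} {hk : k ≤ n} {a : Fin k → Fin n}
    {σ σ₀ : Equiv.Perm (Fin n)} (hσ : σ ∈ topkFinset hk a) (hσ₀ : σ₀ ∈ topkFinset hk a) :
    kendallDist σ σ₀ + kendallDist (antithetic n k σ) σ₀ =
      #{p : Fin n × Fin n | p.1 < p.2 ∧ k ≤ (σ₀⁻¹ p.1 : ℕ) ∧ k ≤ (σ₀⁻¹ p.2 : ℕ)} := by
  rw [kendallDist_eq_card_discordant, kendallDist_eq_card_discordant]
  refine card_filter_add_card_filter_of_partition _ fun p _ => ?_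
  by_cases hp : p.1 < p.2
  · simp only [hp, true_and]
    exact discordant_or_discordant_antithetic_iff_and_not_and hσ hσ₀ hp.ne
  · simp [hp]

theorem kendallDist_self {n : ℕ} (σ : Equiv.Perm (Fin n)) : kendallDist σ σ = 0 := by
  simp [kendallDist]

theorem kendallDist_mul_swap_pos {n : ℕ} (σ : Equiv.Perm (Fin n)) {i j : Fin n} (hij : i < j) :
    0 < kendallDist (σ * Equiv.swap i j) σ := by
  have hinv : (σ * Equiv.swap i j)⁻¹ = Equiv.swap i j * σ⁻¹ := by
    rw [mul_inv_rev, Equiv.swap_inv]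
  rcases lt_or_gt_of_ne (σ.injective.ne hij.ne) with hlt | hlt
  · exact card_pos.2 ⟨(σ i, σ j), by simp [hinv, hlt, hij, hij.not_gt]⟩
  · exact card_pos.2 ⟨(σ j, σ i), by simp [hinv, hlt, hij, hij.not_gt]⟩

theorem antithetic_neg_cov_general {n k : ℕ} (hk : k ≤ n) (hk2 : k + 2 ≤ n)
    (a : Fin k → Fin n)
    (σ₀ : Equiv.Perm (Fin n)) (hσ₀ : σ₀ ∈ topkFinset hk a) :
    let R := topkFinset hk a
    let E : (Equiv.Perm (Fin n) → ℝ) → ℝ := fun f => (∑ σ ∈ R, f σ) / R.card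
    let X : Equiv.Perm (Fin n) → ℝ := fun σ => (kendallDist σ σ₀ : ℝ)
    let Y : Equiv.Perm (Fin n) → ℝ :=
      fun σ => (kendallDist (antithetic n k σ) σ₀ : ℝ)
    E (fun σ => X σ * Y σ) - E X * E Y
        = -(E (fun σ => X σ * X σ) - E X * E X) ∧
      E (fun σ => X σ * Y σ) - E X * E Y < 0 := by
  intro R E X Y
  have hE : E = fun f => 𝔼 σ ∈ R, f σ := funext fun f => (expect_eq_sum_div_card R f).symm
  have hXY : ∀ σ ∈ R, X σ + Y σ = X σ₀ + Y σ₀ := fun σ hσ => by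
    simp only [X, Y]
    exact_mod_cast (kendallDist_add_kendallDist_antithetic hσ hσ₀).trans
      (kendallDist_add_kendallDist_antithetic hσ₀ hσ₀).symm
  have hcov := cov_eq_neg_var_of_add_eq_const ⟨σ₀, hσ₀⟩ hXY
  let i : Fin n := ⟨k, by omega⟩
  let j : Fin n := ⟨k + 1, by omega⟩
  have hX : X σ₀ ≠ X (σ₀ * Equiv.swap i j) := by
    simp only [X, kendallDist_self, Nat.cast_zero]
    exact_mod_cast (kendallDist_mul_swap_pos σ₀ (Fin.lt_def.2 (Nat.lt_succ_self k))).ne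
  have hvar_pos := expect_mul_self_sub_expect_mul_expect_pos hσ₀
    (mul_swap_mem_topkFinset hσ₀ le_rfl (Nat.le_succ k)) hX
  simp only [hE]
  exact ⟨hcov, hcov ▸ neg_neg_of_pos hvar_pos⟩

/-- Let `R` be a top-`k` partial ranking with `n − k ≥ 2`, let `σ` be uniform
on `R`, and let `σ₀ ∈ R`. With `X = d(σ, σ₀)` and `Y = d(A_R(σ), σ₀)`, we
have `Cov(X, Y) = −Var(X) < 0`, where expectations are taken with respect to
the uniform distribution on `R`. -/
theorem antithetic_neg_cov {n k : ℕ} (hk : k ≤ n) (hk2 : k + 2 ≤ n)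
    (a : Fin k → Fin n) (ha : Function.Injective a)
    (σ₀ : Equiv.Perm (Fin n)) (hσ₀ : σ₀ ∈ topkFinset hk a) :
    let R := topkFinset hk a
    let E : (Equiv.Perm (Fin n) → ℝ) → ℝ := fun f => (∑ σ ∈ R, f σ) / R.card
    let X : Equiv.Perm (Fin n) → ℝ := fun σ => (kendallDist σ σ₀ : ℝ)
    let Y : Equiv.Perm (Fin n) → ℝ :=
      fun σ => (kendallDist (antithetic n k σ) σ₀ : ℝ)
    E (fun σ => X σ * Y σ) - E X * E Y
        = -(E (fun σ => X σ * X σ) - E X * E X) ∧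
      E (fun σ => X σ * Y σ) - E X * E Y < 0 :=
  antithetic_neg_cov_general hk hk2 a σ₀ hσ₀
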